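/- arXiv:2109.01562 — 2 statements merged into one kernel-verified Lean document; each statement's English description precedes it below -/
import Mathlib

section
/- Let E : [0,T] × X → [0,∞) satisfy: E(t,·) is differentiable for every t with continuous differential D_x E, and for every R > 0 there exists c_R ∈ L¹(0,T) nonnegative such that |∂_t E(t,u₂) − ∂_t E(t,u₁)| ≤ c_R(t)‖u₂ − u₁‖ for a.e. t and all u₁, u₂ in the ball B_R. Then for every fixed u ∈ X, the map t ↦ D_x E(t,u) is absolutely continuous on [0,T]; more precisely, ‖D_x E(t,u) − D_x E(s,u)‖_* ≤ ∫_s^t c_R(r) dr for all 0 ≤ s ≤ t ≤ T, where R = ‖u‖ + 1. -/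
open MeasureTheory

/-!
`E t - E s` is differentiable at `u` with differential `D_x E(t,u) - D_x E(s,u)`, and by the
integral representation `E t x - E s x = ∫_s^t ∂_t E(r,x) dr` together with the Lipschitz bound on
`∂_t E` it is `∫_s^t c`-Lipschitz on the ball `B_{‖u‖+1}`, a neighbourhood of `u`. A differential
is bounded in operator norm by any local Lipschitz constant.
-/

theorem abs_intervalIntegral_sub_le_of_ae_lipschitzOn {X : Type*} [NormedAddCommGroup X]
    {f : ℝ → X → ℝ} {c : ℝ → ℝ} {a b : ℝ} {S : Set X} (hab : a ≤ b)
    (hf : ∀ x ∈ S, IntervalIntegrable (fun r => f r x) volume a b)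
    (hc : IntervalIntegrable c volume a b)
    (hlip : ∀ᵐ r ∂volume.restrict (Set.Ioc a b),
      ∀ x ∈ S, ∀ y ∈ S, |f r y - f r x| ≤ c r * ‖y - x‖)
    {x y : X} (hx : x ∈ S) (hy : y ∈ S) :
    |(∫ r in a..b, f r y) - ∫ r in a..b, f r x| ≤ (∫ r in a..b, c r) * ‖y - x‖ := by
  rw [← intervalIntegral.integral_sub (hf y hy) (hf x hx), ← intervalIntegral.integral_mul_const,
    ← Real.norm_eq_abs]
  refine intervalIntegral.norm_integral_le_of_norm_le hab ?_ (hc.mul_const _)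
  rw [← ae_restrict_iff' measurableSet_Ioc]
  filter_upwards [hlip] with r hr using hr x hx y hy

theorem DxE_abs_continuous_general {X : Type*} [NormedAddCommGroup X] [NormedSpace ℝ X]
    (T : ℝ)
    (E : ℝ → X → ℝ) (Et : ℝ → X → ℝ) (DE : ℝ → X → (X →L[ℝ] ℝ))
    (hdiff : ∀ t ∈ Set.Icc 0 T, ∀ u : X, HasFDerivAt (E t) (DE t u) u)
    (hEtint : ∀ u : X, IntegrableOn (fun t => Et t u) (Set.Icc 0 T))
    (hAC : ∀ u : X, ∀ s ∈ Set.Icc 0 T, ∀ t ∈ Set.Icc 0 T, s ≤ t →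
        E t u - E s u = ∫ r in s..t, Et r u)
    (u : X) (c : ℝ → ℝ)
    (hc0 : ∀ r, 0 ≤ c r)
    (hcint : IntegrableOn c (Set.Icc 0 T))
    (hlip : ∀ᵐ t ∂(volume.restrict (Set.Icc 0 T)),
        ∀ u₁ ∈ Metric.ball (0 : X) (‖u‖ + 1), ∀ u₂ ∈ Metric.ball (0 : X) (‖u‖ + 1),
          |Et t u₂ - Et t u₁| ≤ c t * ‖u₂ - u₁‖) :
    ∀ s ∈ Set.Icc 0 T, ∀ t ∈ Set.Icc 0 T, s ≤ t →
      ‖DE t u - DE s u‖ ≤ ∫ r in s..t, c r := by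
  intro s hs t ht hst
  have hst_sub : Set.uIcc s t ⊆ Set.Icc 0 T := Set.uIcc_subset_Icc hs ht
  have hIoc_sub : Set.Ioc s t ⊆ Set.Icc 0 T :=
    Set.Ioc_subset_Icc_self.trans (Set.Icc_subset_Icc hs.1 ht.2)
  have hu : u ∈ Metric.ball (0 : X) (‖u‖ + 1) := by simp
  refine ((hdiff t ht u).sub (hdiff s hs u)).le_of_lip'
    (intervalIntegral.integral_nonneg hst fun r _ => hc0 r) ?_
  filter_upwards [Metric.isOpen_ball.mem_nhds hu] with y hy
  rw [Real.norm_eq_abs, Pi.sub_apply, Pi.sub_apply, hAC y s hs t ht hst, hAC u s hs t ht hst]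
  exact abs_intervalIntegral_sub_le_of_ae_lipschitzOn hst
    (fun x _ => ((hEtint x).mono_set hst_sub).intervalIntegrable)
    ((hcint.mono_set hst_sub).intervalIntegrable)
    (ae_restrict_of_ae_restrict_of_subset hIoc_sub hlip) hu hy

/-- under (E2) (differentiability in `x` with jointly continuous
differential `D_x E`), absolute continuity of `E(·,u)` (encoded by the integral
representation with density `∂_t E = Et`), and the local Lipschitz condition (E4)
on `∂_t E`, the map `t ↦ D_x E(t,u)` is absolutely continuous: for `R = ‖u‖+1`
and any admissible `c = c_R`, `‖D_x E(t,u) − D_x E(s,u)‖ ≤ ∫_s^t c_R(r) dr`. -/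
theorem DxE_abs_continuous {X : Type*} [NormedAddCommGroup X] [NormedSpace ℝ X]
    [FiniteDimensional ℝ X]
    (T : ℝ) (hT : 0 < T)
    (E : ℝ → X → ℝ) (Et : ℝ → X → ℝ) (DE : ℝ → X → (X →L[ℝ] ℝ))
    (hE0 : ∀ t u, 0 ≤ E t u)
    (hdiff : ∀ t ∈ Set.Icc 0 T, ∀ u : X, HasFDerivAt (E t) (DE t u) u)
    (hDEcont : ContinuousOn (fun q : ℝ × X => DE q.1 q.2) (Set.Icc 0 T ×ˢ Set.univ))
    (hEtint : ∀ u : X, IntegrableOn (fun t => Et t u) (Set.Icc 0 T))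
    (hAC : ∀ u : X, ∀ s ∈ Set.Icc 0 T, ∀ t ∈ Set.Icc 0 T, s ≤ t →
        E t u - E s u = ∫ r in s..t, Et r u)
    (u : X) (c : ℝ → ℝ)
    (hc0 : ∀ r, 0 ≤ c r)
    (hcint : IntegrableOn c (Set.Icc 0 T))
    (hlip : ∀ᵐ t ∂(volume.restrict (Set.Icc 0 T)),
        ∀ u₁ ∈ Metric.ball (0 : X) (‖u‖ + 1), ∀ u₂ ∈ Metric.ball (0 : X) (‖u‖ + 1),
          |Et t u₂ - Et t u₁| ≤ c t * ‖u₂ - u₁‖) :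
    ∀ s ∈ Set.Icc 0 T, ∀ t ∈ Set.Icc 0 T, s ≤ t →
      ‖DE t u - DE s u‖ ≤ ∫ r in s..t, c r :=
  DxE_abs_continuous_general T E Et DE hdiff hEtint hAC u c hc0 hcint hlip
end

section
/- Let p_V be the viscous contact potential, p_V(v,w) = R(v) + |v|_V · inf{ |w−z|_{V'} : z ∈ K*, w−z ∈ (ker V)^⊥ } if w ∈ K* + (ker V)^⊥ and +∞ otherwise. Then for every w ∈ X*: (1) p_V(·, w) is convex and positively one-homogeneous; (2) p_V(v, ·) is convex for every v; (3) p_V(v,w) ≥ max{ R(v), ⟨w, v⟩ }; (4) p_V(v, 0) = R(v) and p_V(0, w) = χ_{K*+(ker V)^⊥}(w). -/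
open Classical

/-- `K* = ∂R(0) = { w : ⟨w,z⟩ ≤ R(z) ∀z }`. -/
def Kstar {X : Type*} [NormedAddCommGroup X] [NormedSpace ℝ X]
    (R : X → ℝ) : Set (X →L[ℝ] ℝ) :=
  {w | ∀ z, w z ≤ R z}

/-- The effective domain `K* + (ker V)^⊥` of `p_V(v,·)`.  For a symmetric
operator `V` on a finite-dimensional space, the annihilator `(ker V)^⊥ ⊆ X*`
coincides with the range of `V`, so `w ∈ K* + (ker V)^⊥ ↔ ∃ x, w − Vx ∈ K*`. -/
def pVdom {X : Type*} [NormedAddCommGroup X] [NormedSpace ℝ X]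
    (R : X → ℝ) (V : X →L[ℝ] X →L[ℝ] ℝ) : Set (X →L[ℝ] ℝ) :=
  {w | ∃ x : X, w - V x ∈ Kstar R}

/-- `inf { |w−z|_{V'} : z ∈ K*, w−z ∈ (ker V)^⊥ }`.  Writing `w − z = Vx`, one
has `|Vx|_{V'} = ⟨Vx, V'Vx⟩^{1/2} = ⟨Vx,x⟩^{1/2}`, which gives this
formulation avoiding the partial inverse `V'`. -/
noncomputable def distVp {X : Type*} [NormedAddCommGroup X] [NormedSpace ℝ X]
    (R : X → ℝ) (V : X →L[ℝ] X →L[ℝ] ℝ) (w : X →L[ℝ] ℝ) : ℝ :=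
  sInf {s : ℝ | ∃ x : X, w - V x ∈ Kstar R ∧ s = Real.sqrt (V x x)}

/-- The viscous contact potential
`p_V(v,w) = R(v) + |v|_V · inf{ |w−z|_{V'} : z ∈ K*, w−z ∈ (ker V)^⊥ }` if
`w ∈ K* + (ker V)^⊥`, and `+∞` otherwise. -/
noncomputable def pV {X : Type*} [NormedAddCommGroup X] [NormedSpace ℝ X]
    (R : X → ℝ) (V : X →L[ℝ] X →L[ℝ] ℝ) (v : X) (w : X →L[ℝ] ℝ) : EReal :=
  if w ∈ pVdom R V then ((R v + Real.sqrt (V v v) * distVp R V w : ℝ) : EReal) else ⊤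


open Classical

section Helpers
variable {X : Type*} [NormedAddCommGroup X] [NormedSpace ℝ X]
  (R : X → ℝ) (V : X →L[ℝ] X →L[ℝ] ℝ)

lemma V_expand (x y : X) : V (x + y) (x + y) = V x x + V x y + V y x + V y y := by
  simp [map_add]; ring

lemma sqrtV_smul (c : ℝ) (x : X) :
    Real.sqrt (V (c • x) (c • x)) = |c| * Real.sqrt (V x x) := by
  have h : V (c • x) (c • x) = c ^ 2 * V x x := by simp [map_smul]; ring
  rw [h, Real.sqrt_mul (sq_nonneg c), Real.sqrt_sq_eq_abs]

lemma cauchy_schwarz (hVsym : ∀ x y, V x y = V y x) (hVpsd : ∀ x, 0 ≤ V x x)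
    (x y : X) : V x y ≤ Real.sqrt (V x x) * Real.sqrt (V y y) := by
  have hq : ∀ t : ℝ, 0 ≤ V y y * (t * t) + (2 * V x y) * t + V x x := by
    intro t
    have h := hVpsd (x + t • y)
    have he : V (x + t • y) (x + t • y) = V y y * (t * t) + (2 * V x y) * t + V x x := by
      rw [V_expand]
      simp [map_smul, hVsym y x]; ring
    linarith [he ▸ h]
  have hd := discrim_le_zero hq
  rw [discrim] at hd
  have hsq : V x y ^ 2 ≤ V x x * V y y := by nlinarith
  calc V x y ≤ |V x y| := le_abs_self _
    _ = Real.sqrt (V x y ^ 2) := (Real.sqrt_sq_eq_abs _).symm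
    _ ≤ Real.sqrt (V x x * V y y) := Real.sqrt_le_sqrt hsq
    _ = Real.sqrt (V x x) * Real.sqrt (V y y) := Real.sqrt_mul (hVpsd x) _

lemma sqrtV_triangle (hVsym : ∀ x y, V x y = V y x) (hVpsd : ∀ x, 0 ≤ V x x)
    (x y : X) :
    Real.sqrt (V (x + y) (x + y)) ≤ Real.sqrt (V x x) + Real.sqrt (V y y) := by
  have hcs := cauchy_schwarz V hVsym hVpsd x y
  have h1 : V (x + y) (x + y) ≤ (Real.sqrt (V x x) + Real.sqrt (V y y)) ^ 2 := by
    rw [V_expand, add_sq, Real.sq_sqrt (hVpsd x), Real.sq_sqrt (hVpsd y), hVsym y x]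
    linarith
  calc Real.sqrt (V (x + y) (x + y)) ≤ Real.sqrt ((Real.sqrt (V x x) + Real.sqrt (V y y)) ^ 2) :=
        Real.sqrt_le_sqrt h1
    _ = _ := by rw [Real.sqrt_sq (by positivity)]

lemma sqrtV_combo (hVsym : ∀ x y, V x y = V y x) (hVpsd : ∀ x, 0 ≤ V x x)
    (x y : X) {θ : ℝ} (h0 : 0 ≤ θ) (h1 : θ ≤ 1) :
    Real.sqrt (V (θ • x + (1 - θ) • y) (θ • x + (1 - θ) • y)) ≤
      θ * Real.sqrt (V x x) + (1 - θ) * Real.sqrt (V y y) := by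
  calc _ ≤ Real.sqrt (V (θ • x) (θ • x)) + Real.sqrt (V ((1 - θ) • y) ((1 - θ) • y)) :=
        sqrtV_triangle V hVsym hVpsd _ _
    _ = _ := by rw [sqrtV_smul, sqrtV_smul, abs_of_nonneg h0, abs_of_nonneg (by linarith)]

lemma distVp_bddBelow (w : X →L[ℝ] ℝ) :
    BddBelow {s : ℝ | ∃ x : X, w - V x ∈ Kstar R ∧ s = Real.sqrt (V x x)} :=
  ⟨0, fun s hs => by obtain ⟨x, _, rfl⟩ := hs; exact Real.sqrt_nonneg _⟩

lemma distVp_nonneg (w : X →L[ℝ] ℝ) : 0 ≤ distVp R V w :=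
  Real.sInf_nonneg (fun s hs => by obtain ⟨x, _, rfl⟩ := hs; exact Real.sqrt_nonneg _)

lemma distVp_le {w : X →L[ℝ] ℝ} {x : X} (hx : w - V x ∈ Kstar R) :
    distVp R V w ≤ Real.sqrt (V x x) :=
  csInf_le (distVp_bddBelow R V w) ⟨x, hx, rfl⟩

lemma pairing_le (hRnonneg : ∀ v, 0 ≤ R v) (hVsym : ∀ x y, V x y = V y x)
    (hVpsd : ∀ x, 0 ≤ V x x) {w : X →L[ℝ] ℝ} (hw : w ∈ pVdom R V) (v : X) :
    w v ≤ R v + Real.sqrt (V v v) * distVp R V w := by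
  set S := {s : ℝ | ∃ x : X, w - V x ∈ Kstar R ∧ s = Real.sqrt (V x x)} with hS
  obtain ⟨x₀, hx₀⟩ := hw
  have hne : S.Nonempty := ⟨_, x₀, hx₀, rfl⟩
  have key : ∀ s ∈ S, w v ≤ R v + Real.sqrt (V v v) * s := by
    rintro s ⟨x, hx, rfl⟩
    have h1 : w v - V x v ≤ R v := hx v
    have h2 : V x v ≤ Real.sqrt (V x x) * Real.sqrt (V v v) :=
      cauchy_schwarz V hVsym hVpsd x v
    have : (w - V x) v = w v - V x v := rfl
    linarith [h2]
  rcases eq_or_lt_of_le (Real.sqrt_nonneg (V v v)) with hz | hz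
  · obtain ⟨s, hs⟩ := hne
    have := key s hs
    obtain ⟨x, _, rfl⟩ := hs
    nlinarith [Real.sqrt_nonneg (V x x), distVp_nonneg R V w]
  · have hdiv : (w v - R v) / Real.sqrt (V v v) ≤ distVp R V w := by
      apply le_csInf hne
      intro s hs
      rw [div_le_iff₀ hz]
      have := key s hs
      obtain ⟨x, _, rfl⟩ := hs
      nlinarith
    rw [div_le_iff₀ hz] at hdiv
    nlinarith

lemma distVp_convex (hRconv : ConvexOn ℝ Set.univ R) (hVsym : ∀ x y, V x y = V y x)
    (hVpsd : ∀ x, 0 ≤ V x x) {w₁ w₂ : X →L[ℝ] ℝ}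
    (h₁ : w₁ ∈ pVdom R V) (h₂ : w₂ ∈ pVdom R V) {θ : ℝ} (h0 : 0 ≤ θ) (h1 : θ ≤ 1) :
    distVp R V (θ • w₁ + (1 - θ) • w₂) ≤ θ * distVp R V w₁ + (1 - θ) * distVp R V w₂ := by
  obtain ⟨x₁, hx₁⟩ := h₁
  obtain ⟨x₂, hx₂⟩ := h₂
  have hne₁ : {s : ℝ | ∃ x : X, w₁ - V x ∈ Kstar R ∧ s = Real.sqrt (V x x)}.Nonempty :=
    ⟨_, x₁, hx₁, rfl⟩
  have hne₂ : {s : ℝ | ∃ x : X, w₂ - V x ∈ Kstar R ∧ s = Real.sqrt (V x x)}.Nonempty :=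
    ⟨_, x₂, hx₂, rfl⟩
  have mem : ∀ y₁ y₂ : X, w₁ - V y₁ ∈ Kstar R → w₂ - V y₂ ∈ Kstar R →
      (θ • w₁ + (1 - θ) • w₂) - V (θ • y₁ + (1 - θ) • y₂) ∈ Kstar R := by
    intro y₁ y₂ hy₁ hy₂
    intro z
    have e1 := hy₁ z
    have e2 := hy₂ z
    simp only [ContinuousLinearMap.sub_apply] at e1 e2 ⊢
    simp only [ContinuousLinearMap.add_apply, ContinuousLinearMap.smul_apply, map_add,
      map_smul, smul_eq_mul]
    nlinarith
  apply le_of_forall_pos_le_add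
  intro ε hε
  obtain ⟨s₁, hs₁mem, hs₁⟩ := Real.lt_sInf_add_pos hne₁ (half_pos hε)
  obtain ⟨s₂, hs₂mem, hs₂⟩ := Real.lt_sInf_add_pos hne₂ (half_pos hε)
  obtain ⟨y₁, hy₁, rfl⟩ := hs₁mem
  obtain ⟨y₂, hy₂, rfl⟩ := hs₂mem
  have hle : distVp R V (θ • w₁ + (1 - θ) • w₂) ≤
      Real.sqrt (V (θ • y₁ + (1 - θ) • y₂) (θ • y₁ + (1 - θ) • y₂)) :=
    distVp_le R V (mem y₁ y₂ hy₁ hy₂)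
  have hcombo := sqrtV_combo V hVsym hVpsd y₁ y₂ h0 h1
  unfold distVp at hle ⊢
  linarith [mul_le_mul_of_nonneg_left hs₁.le h0,
    mul_le_mul_of_nonneg_left hs₂.le (by linarith : (0:ℝ) ≤ 1 - θ)]

lemma combo_mem (hRconv : ConvexOn ℝ Set.univ R) {w₁ w₂ : X →L[ℝ] ℝ} {x₁ x₂ : X}
    (hx₁ : w₁ - V x₁ ∈ Kstar R) (hx₂ : w₂ - V x₂ ∈ Kstar R) {θ : ℝ}
    (h0 : 0 ≤ θ) (h1 : θ ≤ 1) :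
    (θ • w₁ + (1 - θ) • w₂) - V (θ • x₁ + (1 - θ) • x₂) ∈ Kstar R := by
  intro z
  have e1 := hx₁ z
  have e2 := hx₂ z
  simp only [ContinuousLinearMap.sub_apply] at e1 e2 ⊢
  simp only [ContinuousLinearMap.add_apply, ContinuousLinearMap.smul_apply, map_add,
    map_smul, smul_eq_mul]
  nlinarith

lemma combo_top {a b : ℝ} (ha : 0 ≤ a) (hb : 0 ≤ b) (hab : 0 < a + b) :
    (a : EReal) * ⊤ + (b : EReal) * ⊤ = ⊤ := by
  rcases eq_or_lt_of_le ha with h | h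
  · have hb' : 0 < b := by linarith
    rw [← h, EReal.coe_mul_top_of_pos hb']
    simp
  · rw [EReal.coe_mul_top_of_pos h]
    rcases eq_or_lt_of_le hb with h2 | h2
    · rw [← h2]; simp
    · rw [EReal.coe_mul_top_of_pos h2]; simp

lemma pV_top {w : X →L[ℝ] ℝ} (h : w ∉ pVdom R V) (v : X) : pV R V v w = ⊤ := if_neg h

lemma pV_ne_bot (v : X) (w : X →L[ℝ] ℝ) : pV R V v w ≠ ⊥ := by
  unfold pV; split
  · exact EReal.coe_ne_bot _
  · simp

lemma coe_mul_pV_ne_bot {θ : ℝ} (hθ : 0 ≤ θ) (v : X) (w : X →L[ℝ] ℝ) :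
    (θ : EReal) * pV R V v w ≠ ⊥ := by
  unfold pV; split
  · rw [← EReal.coe_mul]; exact EReal.coe_ne_bot _
  · rcases eq_or_lt_of_le hθ with h | h
    · rw [← h]; simp
    · rw [EReal.coe_mul_top_of_pos h]; simp

end Helpers

/-- basic properties of the viscous contact potential `p_V`:
(1) `p_V(·,w)` is convex and positively one-homogeneous;
(2) `p_V(v,·)` is convex;
(3) `p_V(v,w) ≥ max{R(v), ⟨w,v⟩}`;
(4) `p_V(v,0) = R(v)` and `p_V(0,w) = χ_{K*+(ker V)^⊥}(w)`. -/
theorem pV_properties {X : Type*} [NormedAddCommGroup X] [NormedSpace ℝ X]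
    [FiniteDimensional ℝ X] (R : X → ℝ)
    (hRnonneg : ∀ v, 0 ≤ R v)
    (hRconv : ConvexOn ℝ Set.univ R)
    (hRhom : ∀ c : ℝ, 0 ≤ c → ∀ v, R (c • v) = c * R v)
    (V : X →L[ℝ] X →L[ℝ] ℝ)
    (hVsym : ∀ x y, V x y = V y x)
    (hVpsd : ∀ x, 0 ≤ V x x) :
    (∀ (w : X →L[ℝ] ℝ) (v₁ v₂ : X) (θ : ℝ), 0 ≤ θ → θ ≤ 1 →
        pV R V (θ • v₁ + (1 - θ) • v₂) w ≤
          (θ : EReal) * pV R V v₁ w + ((1 - θ : ℝ) : EReal) * pV R V v₂ w)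
    ∧ (∀ (w : X →L[ℝ] ℝ) (v : X) (c : ℝ), 0 < c →
        pV R V (c • v) w = (c : EReal) * pV R V v w)
    ∧ (∀ (v : X) (w₁ w₂ : X →L[ℝ] ℝ) (θ : ℝ), 0 ≤ θ → θ ≤ 1 →
        pV R V v (θ • w₁ + (1 - θ) • w₂) ≤
          (θ : EReal) * pV R V v w₁ + ((1 - θ : ℝ) : EReal) * pV R V v w₂)
    ∧ (∀ (v : X) (w : X →L[ℝ] ℝ), ((max (R v) (w v) : ℝ) : EReal) ≤ pV R V v w)
    ∧ (∀ v : X, pV R V v 0 = ((R v : ℝ) : EReal))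
    ∧ (∀ w : X →L[ℝ] ℝ,
        (w ∈ pVdom R V → pV R V 0 w = 0) ∧ (w ∉ pVdom R V → pV R V 0 w = ⊤)) := by
  have R0 : R 0 = 0 := by simpa using hRhom 0 le_rfl 0
  refine ⟨?_, ?_, ?_, ?_, ?_, ?_⟩
  · -- convexity in v
    intro w v₁ v₂ θ hθ0 hθ1
    by_cases hw : w ∈ pVdom R V
    · have d0 := distVp_nonneg R V w
      rw [pV, pV, pV, if_pos hw, if_pos hw, if_pos hw,
        ← EReal.coe_mul, ← EReal.coe_mul, ← EReal.coe_add, EReal.coe_le_coe_iff]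
      have hR := hRconv.2 (Set.mem_univ v₁) (Set.mem_univ v₂) hθ0 (by linarith)
        (by ring : θ + (1 - θ) = 1)
      simp only [smul_eq_mul] at hR
      have hs := sqrtV_combo V hVsym hVpsd v₁ v₂ hθ0 hθ1
      nlinarith [mul_le_mul_of_nonneg_right hs d0]
    · rw [pV, pV, pV, if_neg hw, if_neg hw, if_neg hw,
        combo_top hθ0 (by linarith) (by linarith)]
  · -- homogeneity in v
    intro w v c hc
    by_cases hw : w ∈ pVdom R V
    · rw [pV, pV, if_pos hw, if_pos hw, ← EReal.coe_mul, EReal.coe_eq_coe_iff,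
        hRhom c hc.le, sqrtV_smul, abs_of_pos hc]
      ring
    · rw [pV, pV, if_neg hw, if_neg hw, EReal.coe_mul_top_of_pos hc]
  · -- convexity in w
    intro v w₁ w₂ θ hθ0 hθ1
    by_cases h1 : w₁ ∈ pVdom R V
    · by_cases h2 : w₂ ∈ pVdom R V
      · obtain ⟨x₁, hx₁⟩ := h1
        obtain ⟨x₂, hx₂⟩ := h2
        have h1' : w₁ ∈ pVdom R V := ⟨x₁, hx₁⟩
        have h2' : w₂ ∈ pVdom R V := ⟨x₂, hx₂⟩
        have hdom : θ • w₁ + (1 - θ) • w₂ ∈ pVdom R V :=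
          ⟨θ • x₁ + (1 - θ) • x₂, combo_mem R V hRconv hx₁ hx₂ hθ0 hθ1⟩
        rw [pV, pV, pV, if_pos hdom, if_pos h1', if_pos h2',
          ← EReal.coe_mul, ← EReal.coe_mul, ← EReal.coe_add, EReal.coe_le_coe_iff]
        have hD := distVp_convex R V hRconv hVsym hVpsd h1' h2' hθ0 hθ1
        nlinarith [mul_le_mul_of_nonneg_left hD (Real.sqrt_nonneg (V v v))]
      · rcases eq_or_lt_of_le hθ1 with h | h
        · subst h
          simp only [one_smul, sub_self, zero_smul, add_zero, EReal.coe_one, one_mul,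
            EReal.coe_zero, zero_mul]
          exact le_refl _
        · rw [pV_top R V h2 v, EReal.coe_mul_top_of_pos (by linarith : (0:ℝ) < 1 - θ),
            EReal.add_top_of_ne_bot]
          · exact le_top
          · exact coe_mul_pV_ne_bot R V hθ0 v w₁
    · rcases eq_or_lt_of_le hθ0 with h | h
      · subst_vars
        simp only [zero_smul, sub_zero, one_smul, zero_add, EReal.coe_zero, zero_mul,
          EReal.coe_one, one_mul]
        exact le_refl _
      · rw [pV_top R V h1 v, EReal.coe_mul_top_of_pos h, EReal.top_add_of_ne_bot]
        · exact le_top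
        · exact coe_mul_pV_ne_bot R V (by linarith : (0:ℝ) ≤ 1 - θ) v w₂
  · -- lower bound
    intro v w
    rw [pV]
    split
    · rename_i hw
      rw [EReal.coe_le_coe_iff, max_le_iff]
      constructor
      · nlinarith [distVp_nonneg R V w, Real.sqrt_nonneg (V v v)]
      · exact pairing_le R V hRnonneg hVsym hVpsd hw v
    · exact le_top
  · -- pV v 0 = R v
    intro v
    have hmem : (0 : X →L[ℝ] ℝ) - V 0 ∈ Kstar R := by
      intro z; simp [hRnonneg z]
    have h0dom : (0 : X →L[ℝ] ℝ) ∈ pVdom R V := ⟨0, hmem⟩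
    have hD : distVp R V 0 = 0 := by
      refine le_antisymm ?_ (distVp_nonneg R V 0)
      have := distVp_le R V hmem
      simpa using this
    rw [pV, if_pos h0dom, hD]
    norm_num
  · -- pV 0 w = indicator
    intro w
    constructor
    · intro hw
      rw [pV, if_pos hw]
      simp [R0]
    · intro hw
      rw [pV, if_neg hw]
end
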